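/- arXiv:2403.18301 — 2 statements merged into one kernel-verified Lean document; each statement's English description precedes it below -/
import Mathlib

section
/- Let d, K ≥ 1 and let E = ℝ^{d×K} with the Frobenius inner product. Let ψ : E → ℝ be concave and differentiable with γ-Lipschitz gradient for some γ > 0, and let W* be a global maximizer of ψ. Let c > 0, R > 0 and set R₀ = ‖W*‖ + R. On a probability space with a filtration (F_t)_{t≥1}, let W^(1) ∈ E be constant and for each t ≥ 1 let v^(t) : Ω → E be F_t-measurable with ‖v^(t)(ω)‖ = 1 for all ω; set W^(t+1) = W^(t) + η_t v^(t), where η_t = (c/(2γ)) E[‖∇ψ(W^(t))‖]. Assume for every t ≥ 1, almost surely ⟨E[v^(t) | F_{t−1}], ∇ψ(W^(t))⟩ ≥ c‖∇ψ(W^(t))‖, and ‖W^(t)‖ < R. Then for every t > 1: ψ(W*) − E[ψ(W^(t))] ≤ 4γR₀² / (c²(t−1)). -/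
/-!
Write `δₜ = ψ(W*) - E ψ(W⁽ᵗ⁾)` and `Gₜ = E ‖∇ψ(W⁽ᵗ⁾)‖`. The first-order characterisation of
concavity and `‖W⁽ᵗ⁾‖ < R` give `δₜ ≤ R₀ Gₜ`. The smoothness bound
`ψ(W + η v) ≥ ψ(W) + η ⟪∇ψ(W), v⟫ - γ η²`, averaged, together with the alignment condition
(transferred from `E[v⁽ᵗ⁾ | F_{t-1}]` to `v⁽ᵗ⁾` by the pull-out property, since `W⁽ᵗ⁾` is
`F_{t-1}`-measurable) gives `δₜ₊₁ ≤ δₜ - c² Gₜ² / (4γ)`. Hence `δₜ₊₁ ≤ δₜ - α δₜ²` with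
`α = c² / (4γR₀²)`, and a nonnegative sequence with this property satisfies `α (t - 1) δₜ ≤ 1`.
-/

open MeasureTheory
open scoped RealInnerProductSpace

section Gradient

variable {E : Type*} [NormedAddCommGroup E] [InnerProductSpace ℝ E] [CompleteSpace E]

theorem ConcaveOn.sub_le_inner_of_hasGradientAt {s : Set E} {ψ : E → ℝ} {x z g : E}
    (hψ : ConcaveOn ℝ s ψ) (hx : x ∈ s) (hz : z ∈ s) (hg : HasGradientAt ψ g x) :
    ψ z - ψ x ≤ ⟪g, z - x⟫ := by
  set ℓ : ℝ →ᵃ[ℝ] E := AffineMap.lineMap x z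
  have hderiv : HasDerivAt (ψ ∘ ℓ) ⟪g, z - x⟫ 0 := by
    have hg' : HasFDerivAt ψ (InnerProductSpace.toDual ℝ E g) (ℓ 0) := by
      simpa [ℓ] using hg.hasFDerivAt
    simpa using hg'.comp_hasDerivAt (0 : ℝ) AffineMap.hasDerivAt_lineMap
  simpa [slope, ℓ] using (hψ.comp_affineMap ℓ).slope_le_of_hasDerivAt (x := 0) (y := 1)
    (by simpa [ℓ] using hx) (by simpa [ℓ] using hz) one_pos hderiv

theorem abs_sub_sub_inner_le_of_lipschitz_gradient {ψ : E → ℝ} {g : E → E} {γ : ℝ}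
    (hγ : 0 ≤ γ) (hgrad : ∀ x, HasGradientAt ψ (g x) x)
    (hlip : ∀ x y, ‖g x - g y‖ ≤ γ * ‖x - y‖) (x y : E) :
    |ψ y - ψ x - ⟪g x, y - x⟫| ≤ γ * ‖y - x‖ ^ 2 := by
  have hbound : ∀ z ∈ segment ℝ x y,
      ‖InnerProductSpace.toDual ℝ E (g z) - InnerProductSpace.toDual ℝ E (g x)‖ ≤
        γ * ‖y - x‖ := by
    intro z hz
    rw [← map_sub, LinearIsometryEquiv.norm_map]
    exact (hlip z x).trans (mul_le_mul_of_nonneg_left (norm_sub_le_of_mem_segment hz) hγ)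
  have := (convex_segment x y).norm_image_sub_le_of_norm_hasFDerivWithin_le'
    (fun z _ => (hgrad z).hasFDerivAt.hasFDerivWithinAt) hbound
    (left_mem_segment ℝ x y) (right_mem_segment ℝ x y)
  simpa [sq, mul_assoc] using this

end Gradient

theorem mul_sub_one_mul_le_one_of_le_sub_mul_sq {δ : ℕ → ℝ} {α : ℝ} (hα : 0 ≤ α)
    (hδ : ∀ t, 1 ≤ t → 0 ≤ δ t) (hstep : ∀ t, 1 ≤ t → δ (t + 1) ≤ δ t - α * δ t ^ 2) :
    ∀ t : ℕ, 1 ≤ t → α * ((t : ℝ) - 1) * δ t ≤ 1 := by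
  intro t ht
  induction t, ht using Nat.le_induction with
  | base => simp
  | succ n hn ih =>
    set x := α * δ n
    have hnext : α * δ (n + 1) ≤ x - x ^ 2 := by
      have := mul_le_mul_of_nonneg_left (hstep n hn) hα
      linear_combination this
    have hx1 : x ≤ 1 := by nlinarith [mul_nonneg hα (hδ (n + 1) (by omega))]
    have hn1 : (1 : ℝ) ≤ n := by exact_mod_cast hn
    push_cast
    -- `n x (1 - x) ≤ (1 + x) (1 - x) ≤ 1`, using `(n - 1) x ≤ 1`
    nlinarith [mul_le_mul_of_nonneg_left hnext (by linarith : (0 : ℝ) ≤ n),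
      mul_le_mul_of_nonneg_right ih (sub_nonneg.2 hx1)]

theorem le_div_of_le_mul_of_le_sub_mul_sq {δ G : ℕ → ℝ} {κ R : ℝ} (hκ : 0 < κ) (hR : 0 < R)
    (hδ : ∀ t, 1 ≤ t → 0 ≤ δ t) (hδG : ∀ t, 1 ≤ t → δ t ≤ R * G t)
    (hstep : ∀ t, 1 ≤ t → δ (t + 1) ≤ δ t - κ * G t ^ 2) {t : ℕ} (ht : 1 < t) :
    δ t ≤ R ^ 2 / (κ * ((t : ℝ) - 1)) := by
  have hα : 0 < κ / R ^ 2 := by positivity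
  have hrec : ∀ t, 1 ≤ t → δ (t + 1) ≤ δ t - κ / R ^ 2 * δ t ^ 2 := by
    intro t ht
    have hsq : δ t ^ 2 ≤ (R * G t) ^ 2 := pow_le_pow_left₀ (hδ t ht) (hδG t ht) 2
    have : κ / R ^ 2 * δ t ^ 2 ≤ κ * G t ^ 2 := by
      calc κ / R ^ 2 * δ t ^ 2 ≤ κ / R ^ 2 * (R * G t) ^ 2 := by gcongr
        _ = κ * G t ^ 2 := by field_simp
    linarith [hstep t ht]
  have hmain := mul_sub_one_mul_le_one_of_le_sub_mul_sq hα.le hδ hrec t ht.le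
  have ht' : (0 : ℝ) < t - 1 := by
    have : (1 : ℝ) < t := by exact_mod_cast ht
    linarith
  rw [le_div_iff₀ (by positivity)]
  calc δ t * (κ * ((t : ℝ) - 1)) = κ / R ^ 2 * ((t : ℝ) - 1) * δ t * R ^ 2 := by
        field_simp
    _ ≤ R ^ 2 := by nlinarith [sq_nonneg R]

theorem stronglyMeasurable_iterate_add_smul {Ω E : Type*} [NormedAddCommGroup E]
    [NormedSpace ℝ E] {m0 : MeasurableSpace Ω} (ℱ : Filtration ℕ m0) {W v : ℕ → Ω → E}
    {η : ℕ → ℝ} (hW1 : StronglyMeasurable[ℱ 0] (W 1))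
    (hv : ∀ t, 1 ≤ t → StronglyMeasurable[ℱ t] (v t))
    (hrec : ∀ t, 1 ≤ t → ∀ ω, W (t + 1) ω = W t ω + η t • v t ω) :
    ∀ t, 1 ≤ t → StronglyMeasurable[ℱ (t - 1)] (W t) := by
  intro t ht
  induction t, ht using Nat.le_induction with
  | base => exact hW1
  | succ n hn ih =>
    rw [funext (hrec n hn)]
    exact (ih.mono (ℱ.mono (Nat.sub_le n 1))).add ((hv n hn).const_smul (η n))

theorem integral_le_integral_inner_of_le_inner_condExp {Ω E : Type*}
    [NormedAddCommGroup E] [InnerProductSpace ℝ E] [CompleteSpace E]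
    {m m0 : MeasurableSpace Ω} {μ : Measure Ω} [IsFiniteMeasure μ] (hm : m ≤ m0)
    {Y f : Ω → E} {a : Ω → ℝ} (hY : StronglyMeasurable[m] Y) (hf : Integrable f μ)
    (hYf : Integrable (fun ω => ⟪Y ω, f ω⟫) μ) (ha : Integrable a μ)
    (h : ∀ᵐ ω ∂μ, a ω ≤ ⟪(μ[f|m]) ω, Y ω⟫) :
    ∫ ω, a ω ∂μ ≤ ∫ ω, ⟪Y ω, f ω⟫ ∂μ := by
  have hpull : μ[fun ω => ⟪Y ω, f ω⟫|m] =ᵐ[μ] fun ω => ⟪Y ω, (μ[f|m]) ω⟫ :=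
    condExp_bilin_of_stronglyMeasurable_left (innerSL ℝ) hY hYf hf
  calc ∫ ω, a ω ∂μ ≤ ∫ ω, (μ[fun ω => ⟪Y ω, f ω⟫|m]) ω ∂μ := by
        refine integral_mono_ae ha integrable_condExp ?_
        filter_upwards [h, hpull] with ω hω hω'
        rw [hω', real_inner_comm]
        exact hω
    _ = ∫ ω, ⟪Y ω, f ω⟫ ∂μ := integral_condExp hm

theorem Continuous.integrable_comp_of_ae_norm_le {Ω E F : Type*} [NormedAddCommGroup E]
    [ProperSpace E] [NormedAddCommGroup F] {m0 : MeasurableSpace Ω} {μ : Measure Ω}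
    [IsFiniteMeasure μ] {Φ : E → F} (hΦ : Continuous Φ) {X : Ω → E}
    (hX : AEStronglyMeasurable X μ) {R : ℝ} (hXR : ∀ᵐ ω ∂μ, ‖X ω‖ ≤ R) :
    Integrable (fun ω => Φ (X ω)) μ := by
  obtain ⟨C, hC⟩ := (isCompact_closedBall (0 : E) R).exists_bound_of_continuousOn
    hΦ.continuousOn
  refine Integrable.of_bound (hΦ.comp_aestronglyMeasurable hX) C ?_
  filter_upwards [hXR] with ω hω
  exact hC _ (mem_closedBall_zero_iff.mpr hω)

section Expectation

variable {Ω E : Type*} [NormedAddCommGroup E] [InnerProductSpace ℝ E] [CompleteSpace E]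
  {m0 : MeasurableSpace Ω} {μ : Measure Ω} [IsProbabilityMeasure μ]
  {ψ : E → ℝ} {g : E → E}

theorem ConcaveOn.sub_integral_le_mul_integral_norm (hψ : ConcaveOn ℝ Set.univ ψ)
    (hgrad : ∀ x, HasGradientAt ψ (g x) x) (w : E) {X : Ω → E} {R : ℝ}
    (hXR : ∀ᵐ ω ∂μ, ‖X ω‖ ≤ R) (hψX : Integrable (fun ω => ψ (X ω)) μ)
    (hgX : Integrable (fun ω => ‖g (X ω)‖) μ) :
    ψ w - ∫ ω, ψ (X ω) ∂μ ≤ (‖w‖ + R) * ∫ ω, ‖g (X ω)‖ ∂μ := by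
  have hpt : ∀ᵐ ω ∂μ, ψ w - ψ (X ω) ≤ (‖w‖ + R) * ‖g (X ω)‖ := by
    filter_upwards [hXR] with ω hω
    calc ψ w - ψ (X ω) ≤ ⟪g (X ω), w - X ω⟫ :=
          hψ.sub_le_inner_of_hasGradientAt trivial trivial (hgrad _)
      _ ≤ ‖g (X ω)‖ * ‖w - X ω‖ := real_inner_le_norm _ _
      _ ≤ ‖g (X ω)‖ * (‖w‖ + R) := by
          gcongr
          exact (norm_sub_le _ _).trans (by linarith)
      _ = (‖w‖ + R) * ‖g (X ω)‖ := mul_comm _ _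
  have := integral_mono_ae (f := fun ω => ψ w - ψ (X ω)) ((integrable_const _).sub hψX)
    (hgX.const_mul _) hpt
  rwa [integral_sub (integrable_const _) hψX, integral_const_mul, integral_const,
    probReal_univ, one_smul] at this

theorem integral_add_mul_sq_le_integral_add_smul {γ c η : ℝ} (hγ : 0 < γ) (hc : 0 ≤ c)
    (hgrad : ∀ x, HasGradientAt ψ (g x) x) (hlip : ∀ x y, ‖g x - g y‖ ≤ γ * ‖x - y‖)
    {X V : Ω → E} (hV : AEStronglyMeasurable V μ) (hVnorm : ∀ ω, ‖V ω‖ = 1)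
    {m : MeasurableSpace Ω} (hm : m ≤ m0) (hX : StronglyMeasurable[m] X)
    (halign : ∀ᵐ ω ∂μ, c * ‖g (X ω)‖ ≤ ⟪(μ[V|m]) ω, g (X ω)⟫)
    (hη : η = c / (2 * γ) * ∫ ω, ‖g (X ω)‖ ∂μ)
    (hψX : Integrable (fun ω => ψ (X ω)) μ) (hgX : Integrable (fun ω => g (X ω)) μ)
    (hψXV : Integrable (fun ω => ψ (X ω + η • V ω)) μ) :
    ∫ ω, ψ (X ω) ∂μ + c ^ 2 / (4 * γ) * (∫ ω, ‖g (X ω)‖ ∂μ) ^ 2 ≤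
      ∫ ω, ψ (X ω + η • V ω) ∂μ := by
  set G := ∫ ω, ‖g (X ω)‖ ∂μ
  have hpt : ∀ ω, ψ (X ω) + η * ⟪g (X ω), V ω⟫ - γ * η ^ 2 ≤ ψ (X ω + η • V ω) := by
    intro ω
    have := abs_sub_sub_inner_le_of_lipschitz_gradient hγ.le hgrad hlip (X ω) (X ω + η • V ω)
    rw [add_sub_cancel_left, inner_smul_right, norm_smul, hVnorm, mul_one, Real.norm_eq_abs,
      sq_abs] at this
    linarith [(abs_le.mp this).1]
  have hgm : StronglyMeasurable[m] fun ω => g (X ω) :=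
    (LipschitzWith.of_dist_le' (by simpa [dist_eq_norm] using hlip)).continuous
      |>.comp_stronglyMeasurable hX
  have hinner : Integrable (fun ω => ⟪g (X ω), V ω⟫) μ := by
    refine hgX.norm.mono' (hgX.aestronglyMeasurable.inner hV) (ae_of_all _ fun ω => ?_)
    simpa [hVnorm] using norm_inner_le_norm (𝕜 := ℝ) (g (X ω)) (V ω)
  have hV_int : Integrable V μ := .of_bound hV 1 (ae_of_all _ fun ω => (hVnorm ω).le)
  have hcG : c * G ≤ ∫ ω, ⟪g (X ω), V ω⟫ ∂μ := by
    rw [← integral_const_mul]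
    exact integral_le_integral_inner_of_le_inner_condExp hm hgm hV_int hinner
      (hgX.norm.const_mul c) halign
  have hsum : Integrable (fun ω => ψ (X ω) + η * ⟪g (X ω), V ω⟫) μ :=
    hψX.add (hinner.const_mul η)
  have hmono := integral_mono (f := fun ω => ψ (X ω) + η * ⟪g (X ω), V ω⟫ - γ * η ^ 2)
    (hsum.sub (integrable_const (γ * η ^ 2))) hψXV hpt
  rw [integral_sub hsum (integrable_const _), integral_add hψX (hinner.const_mul η),
    integral_const_mul, integral_const, probReal_univ, one_smul] at hmono
  -- the step size `η = c G / (2γ)` maximises `η c G - γ η²`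
  have hηG : η * (c * G) - γ * η ^ 2 = c ^ 2 / (4 * γ) * G ^ 2 := by
    rw [hη]; field_simp; ring
  have hη0 : 0 ≤ η := hη ▸ by positivity
  nlinarith [mul_le_mul_of_nonneg_left hcG hη0]

end Expectation

theorem selmix_convergence_general
    (d K : ℕ)
    {Ω : Type*} [m0 : MeasurableSpace Ω] (μ : Measure Ω) [IsProbabilityMeasure μ]
    (ℱ : Filtration ℕ m0)
    (ψ : EuclideanSpace ℝ (Fin d × Fin K) → ℝ)
    (g : EuclideanSpace ℝ (Fin d × Fin K) → EuclideanSpace ℝ (Fin d × Fin K))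
    (γ c R : ℝ) (hγ : 0 < γ) (hc : 0 < c) (hR : 0 < R)
    (hconc : ConcaveOn ℝ Set.univ ψ)
    (hgrad : ∀ x, HasGradientAt ψ (g x) x)
    (hlip : ∀ x y, ‖g x - g y‖ ≤ γ * ‖x - y‖)
    (Wstar : EuclideanSpace ℝ (Fin d × Fin K))
    (hmax : ∀ x, ψ x ≤ ψ Wstar)
    (R₀ : ℝ) (hR₀ : R₀ = ‖Wstar‖ + R)
    (W v : ℕ → Ω → EuclideanSpace ℝ (Fin d × Fin K)) (η : ℕ → ℝ)
    (hW1 : ∃ w₀, ∀ ω, W 1 ω = w₀)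
    (hvmeas : ∀ t, 1 ≤ t → StronglyMeasurable[ℱ t] (v t))
    (hvnorm : ∀ t, 1 ≤ t → ∀ ω, ‖v t ω‖ = 1)
    (hη : ∀ t, 1 ≤ t → η t = c / (2 * γ) * ∫ ω, ‖g (W t ω)‖ ∂μ)
    (hWrec : ∀ t, 1 ≤ t → ∀ ω, W (t + 1) ω = W t ω + η t • v t ω)
    (halign : ∀ t, 1 ≤ t →
      ∀ᵐ ω ∂μ, c * ‖g (W t ω)‖ ≤ ⟪(μ[v t | ℱ (t - 1)]) ω, g (W t ω)⟫)
    (hbound : ∀ t, 1 ≤ t → ∀ᵐ ω ∂μ, ‖W t ω‖ < R) :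
    ∀ t : ℕ, 1 < t →
      ψ Wstar - ∫ ω, ψ (W t ω) ∂μ ≤ 4 * γ * R₀ ^ 2 / (c ^ 2 * ((t : ℝ) - 1)) := by
  have hψc : Continuous ψ :=
    continuous_iff_continuousAt.2 fun x => (hgrad x).hasFDerivAt.continuousAt
  have hgc : Continuous g :=
    (LipschitzWith.of_dist_le' (by simpa [dist_eq_norm] using hlip)).continuous
  obtain ⟨w₀, hw₀⟩ := hW1
  have hWm := stronglyMeasurable_iterate_add_smul ℱ
    (by rw [funext hw₀]; exact stronglyMeasurable_const) hvmeas hWrec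
  have hWR : ∀ t, 1 ≤ t → ∀ᵐ ω ∂μ, ‖W t ω‖ ≤ R := fun t ht =>
    (hbound t ht).mono fun _ h => h.le
  have hint : ∀ {F : Type} [NormedAddCommGroup F] {Φ : EuclideanSpace ℝ (Fin d × Fin K) → F},
      Continuous Φ → ∀ t, 1 ≤ t → Integrable (fun ω => Φ (W t ω)) μ := fun hΦ t ht =>
    hΦ.integrable_comp_of_ae_norm_le ((hWm t ht).mono (ℱ.le _)).aestronglyMeasurable (hWR t ht)
  intro t ht
  subst hR₀
  refine (le_div_of_le_mul_of_le_sub_mul_sq (δ := fun t => ψ Wstar - ∫ ω, ψ (W t ω) ∂μ)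
    (G := fun t => ∫ ω, ‖g (W t ω)‖ ∂μ) (κ := c ^ 2 / (4 * γ)) (R := ‖Wstar‖ + R)
    (by positivity) (by positivity) (fun t ht => ?_) (fun t ht => ?_) (fun t ht => ?_)
    ht).trans_eq (by field_simp)
  · simpa using integral_mono (hint hψc t ht) (integrable_const _) fun ω => hmax (W t ω)
  · exact hconc.sub_integral_le_mul_integral_norm hgrad Wstar (hWR t ht) (hint hψc t ht)
      (hint hgc.norm t ht)
  · have := integral_add_mul_sq_le_integral_add_smul hγ hc.le hgrad hlip
      ((hvmeas t ht).mono (ℱ.le t)).aestronglyMeasurable (hvnorm t ht) (ℱ.le (t - 1))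
      (hWm t ht) (halign t ht) (hη t ht) (hint hψc t ht) (hint hgc t ht)
      (by simpa only [hWrec t ht] using hint hψc (t + 1) (by omega))
    simp only [hWrec t ht]
    linarith

/-- Convergence of the SelMix stochastic update (Theorem C.1 / Theorem 3.2 of the SelMix
paper). Here `E = ℝ^{d×K}` with the Frobenius inner product is realized as
`EuclideanSpace ℝ (Fin d × Fin K)`, `ψ` is concave and differentiable with `γ`-Lipschitz
gradient `g`, `Wstar` is a global maximizer, and the iterates satisfy
`W^(t+1) = W^(t) + η_t v^(t)` with unit-norm `ℱ t`-measurable directions `v^(t)`,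
step sizes `η_t = (c/(2γ)) E[‖g(W^(t))‖]`, alignment
`⟪E[v^(t) | ℱ (t-1)], g(W^(t))⟫ ≥ c ‖g(W^(t))‖` a.s., and boundedness `‖W^(t)‖ < R` a.s.
Then for `t > 1`, `ψ(Wstar) - E[ψ(W^(t))] ≤ 4 γ R₀² / (c² (t-1))` with `R₀ = ‖Wstar‖ + R`. -/
theorem selmix_convergence
    (d K : ℕ) (hd : 1 ≤ d) (hK : 1 ≤ K)
    {Ω : Type*} [m0 : MeasurableSpace Ω] (μ : Measure Ω) [IsProbabilityMeasure μ]
    (ℱ : Filtration ℕ m0)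
    (ψ : EuclideanSpace ℝ (Fin d × Fin K) → ℝ)
    (g : EuclideanSpace ℝ (Fin d × Fin K) → EuclideanSpace ℝ (Fin d × Fin K))
    (γ c R : ℝ) (hγ : 0 < γ) (hc : 0 < c) (hR : 0 < R)
    (hconc : ConcaveOn ℝ Set.univ ψ)
    (hgrad : ∀ x, HasGradientAt ψ (g x) x)
    (hlip : ∀ x y, ‖g x - g y‖ ≤ γ * ‖x - y‖)
    (Wstar : EuclideanSpace ℝ (Fin d × Fin K))
    (hmax : ∀ x, ψ x ≤ ψ Wstar)
    (R₀ : ℝ) (hR₀ : R₀ = ‖Wstar‖ + R)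
    (W v : ℕ → Ω → EuclideanSpace ℝ (Fin d × Fin K)) (η : ℕ → ℝ)
    (hW1 : ∃ w₀, ∀ ω, W 1 ω = w₀)
    (hvmeas : ∀ t, 1 ≤ t → StronglyMeasurable[ℱ t] (v t))
    (hvnorm : ∀ t, 1 ≤ t → ∀ ω, ‖v t ω‖ = 1)
    (hη : ∀ t, 1 ≤ t → η t = c / (2 * γ) * ∫ ω, ‖g (W t ω)‖ ∂μ)
    (hWrec : ∀ t, 1 ≤ t → ∀ ω, W (t + 1) ω = W t ω + η t • v t ω)
    (halign : ∀ t, 1 ≤ t →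
      ∀ᵐ ω ∂μ, c * ‖g (W t ω)‖ ≤ ⟪(μ[v t | ℱ (t - 1)]) ω, g (W t ω)⟫)
    (hbound : ∀ t, 1 ≤ t → ∀ᵐ ω ∂μ, ‖W t ω‖ < R) :
    ∀ t : ℕ, 1 < t →
      ψ Wstar - ∫ ω, ψ (W t ω) ∂μ ≤ 4 * γ * R₀ ^ 2 / (c ^ 2 * ((t : ℝ) - 1)) :=
  selmix_convergence_general d K (m0 := m0) μ ℱ ψ g γ c R hγ hc hR hconc hgrad hlip Wstar hmax R₀
    hR₀ W v η hW1 hvmeas hvnorm hη hWrec halign hbound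
end

section
/- Let K ≥ 1 and define the softmax function σ : ℝ^K → ℝ^K by σ(ξ)_l = exp(ξ_l) / Σ_{m=1}^{K} exp(ξ_m). There exists a constant c > 0 depending only on K such that for every random vector ξ in ℝ^K on a probability space with ‖ξ‖² integrable, and for every l ∈ [K]: |E[σ_l(ξ)] − σ_l(E[ξ])| ≤ c · Σ_{m=1}^{K} Var(ξ_m). -/
open MeasureTheory

/-- The softmax function `σ : ℝ^K → ℝ^K`, `σ(ξ)_l = exp(ξ_l) / ∑ₘ exp(ξ_m)`. -/
noncomputable def softmax {K : ℕ} (ξ : Fin K → ℝ) (l : Fin K) : ℝ :=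
  Real.exp (ξ l) / ∑ m, Real.exp (ξ m)

/-!
Expand `σ_l` to second order around the mean `a = E[ξ]`. Along the segment `t ↦ a + t v`,
`d²/dt² σ_l = σ_l ((v_l - ⟨σ, v⟩)² - Var_σ(v))`, where `⟨σ, v⟩` and `Var_σ(v)` are the mean and
variance of `v` under the probability weights `σ`; this is at most `6 ‖v‖∞²`. Hence
`σ_l(x) = σ_l(a) + ∇σ_l(a) (x - a) + O(‖x - a‖²)` with a constant independent of `a`. The linear
term has zero expectation at `x = ξ`, leaving `|E[σ_l(ξ)] - σ_l(a)| ≤ 6 E‖ξ - a‖² = 6 ∑ₘ Var(ξ_m)`.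
-/

open Set

theorem abs_sub_sub_deriv_le_of_abs_deriv2_le {f f' f'' : ℝ → ℝ} {C : ℝ}
    (hf : ∀ t ∈ Icc (0 : ℝ) 1, HasDerivAt f (f' t) t)
    (hf' : ∀ t ∈ Icc (0 : ℝ) 1, HasDerivAt f' (f'' t) t)
    (hC : ∀ t ∈ Icc (0 : ℝ) 1, |f'' t| ≤ C) :
    |f 1 - f 0 - f' 0| ≤ C := by
  have hf'_lip : ∀ t ∈ Icc (0 : ℝ) 1, ‖f' t - f' 0‖ ≤ C * (t - 0) :=
    norm_image_sub_le_of_norm_deriv_le_segment' (fun t ht => (hf' t ht).hasDerivWithinAt)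
      fun t ht => hC t (Ico_subset_Icc_self ht)
  have hC0 : 0 ≤ C := (abs_nonneg _).trans (hC 0 (left_mem_Icc.2 zero_le_one))
  have := norm_image_sub_le_of_norm_deriv_le_segment_01' (f := fun t => f t - t * f' 0)
    (fun t ht => ((hf t ht).sub (hasDerivAt_mul_const (f' 0))).hasDerivWithinAt)
    fun t ht => (hf'_lip t (Ico_subset_Icc_self ht)).trans (by nlinarith [ht.1, ht.2])
  simpa [Real.norm_eq_abs, sub_sub, add_comm] using this

lemma sq_norm_le_sum_sq {ι : Type*} [Fintype ι] (v : ι → ℝ) : ‖v‖ ^ 2 ≤ ∑ i, v i ^ 2 := by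
  have hsum : 0 ≤ ∑ i, v i ^ 2 := Finset.sum_nonneg fun i _ => sq_nonneg (v i)
  refine (Real.le_sqrt (norm_nonneg v) hsum).1 ?_
  refine (pi_norm_le_iff_of_nonneg (Real.sqrt_nonneg _)).2 fun i => ?_
  rw [Real.norm_eq_abs, ← Real.sqrt_sq_eq_abs]
  exact Real.sqrt_le_sqrt (Finset.single_le_sum (fun j _ => sq_nonneg (v j)) (Finset.mem_univ i))

lemma hasDerivAt_add_smul {E : Type*} [NormedAddCommGroup E] [NormedSpace ℝ E] (u v : E)
    (t : ℝ) : HasDerivAt (fun s : ℝ => u + s • v) v t := by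
  simpa using ((hasDerivAt_id t).smul_const v).const_add u

theorem abs_integral_comp_sub_apply_integral_le {Ω E : Type*} [MeasurableSpace Ω]
    {μ : Measure Ω} [IsProbabilityMeasure μ] [NormedAddCommGroup E] [NormedSpace ℝ E]
    [CompleteSpace E] {ξ : Ω → E} (hξ : Integrable ξ μ) {f : E → ℝ}
    (hf : Integrable (fun ω => f (ξ ω)) μ) (L : E →L[ℝ] ℝ) {g : Ω → ℝ} (hg : Integrable g μ)
    (hfL : ∀ ω, |f (ξ ω) - f (∫ ω', ξ ω' ∂μ) - L (ξ ω - ∫ ω', ξ ω' ∂μ)| ≤ g ω) :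
    |(∫ ω, f (ξ ω) ∂μ) - f (∫ ω, ξ ω ∂μ)| ≤ ∫ ω, g ω ∂μ := by
  set a := ∫ ω, ξ ω ∂μ
  have hdev : Integrable (fun ω => ξ ω - a) μ := hξ.sub (integrable_const a)
  have hL : ∫ ω, L (ξ ω - a) ∂μ = 0 := by
    rw [L.integral_comp_comm hdev, integral_sub hξ (integrable_const a), integral_const,
      probReal_univ, one_smul, sub_self, map_zero]
  have hgap : (∫ ω, f (ξ ω) ∂μ) - f a = ∫ ω, (f (ξ ω) - f a - L (ξ ω - a)) ∂μ := by
    have hf_sub : Integrable (fun ω => f (ξ ω) - f a) μ := hf.sub (integrable_const _)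
    rw [integral_sub hf_sub (L.integrable_comp hdev), hL, integral_sub hf (integrable_const _),
      integral_const, probReal_univ, one_smul, sub_zero]
  rw [hgap, ← Real.norm_eq_abs]
  exact norm_integral_le_of_norm_le hg (.of_forall hfL)

section Softmax

variable {K : ℕ}

lemma sum_exp_pos [Nonempty (Fin K)] (ξ : Fin K → ℝ) : 0 < ∑ m, Real.exp (ξ m) :=
  Finset.sum_pos (fun _ _ => Real.exp_pos _) Finset.univ_nonempty

lemma softmax_nonneg (ξ : Fin K → ℝ) (l : Fin K) : 0 ≤ softmax ξ l :=
  div_nonneg (Real.exp_pos _).le (Finset.sum_nonneg fun _ _ => (Real.exp_pos _).le)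

lemma softmax_le_one (ξ : Fin K → ℝ) (l : Fin K) : softmax ξ l ≤ 1 := by
  have : Nonempty (Fin K) := ⟨l⟩
  rw [softmax, div_le_one (sum_exp_pos ξ)]
  exact Finset.single_le_sum (fun m _ => (Real.exp_pos (ξ m)).le) (Finset.mem_univ l)

lemma sum_softmax [Nonempty (Fin K)] (ξ : Fin K → ℝ) : ∑ m, softmax ξ m = 1 := by
  simp only [softmax]
  rw [← Finset.sum_div, div_self (sum_exp_pos ξ).ne']

lemma continuous_softmax [Nonempty (Fin K)] (l : Fin K) :
    Continuous fun ξ : Fin K → ℝ => softmax ξ l :=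
  (Real.continuous_exp.comp (continuous_apply l)).div
    (continuous_finsetSum _ fun m _ => Real.continuous_exp.comp (continuous_apply m))
    fun ξ => (sum_exp_pos ξ).ne'

lemma abs_sum_softmax_mul_le [Nonempty (Fin K)] (ξ : Fin K → ℝ) {f : Fin K → ℝ} {B : ℝ}
    (hf : ∀ m, |f m| ≤ B) : |∑ m, softmax ξ m * f m| ≤ B :=
  calc |∑ m, softmax ξ m * f m| ≤ ∑ m, softmax ξ m * |f m| := by
        refine (Finset.abs_sum_le_sum_abs _ _).trans_eq (Finset.sum_congr rfl fun m _ => ?_)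
        rw [abs_mul, abs_of_nonneg (softmax_nonneg ξ m)]
    _ ≤ ∑ m, softmax ξ m * B :=
        Finset.sum_le_sum fun m _ => mul_le_mul_of_nonneg_left (hf m) (softmax_nonneg ξ m)
    _ = B := by rw [← Finset.sum_mul, sum_softmax, one_mul]

/-- The differential of `σ_l` at `u`: `∂σ_l/∂u_j = σ_l (δ_lj - σ_j)`. -/
noncomputable def softmaxDeriv (u : Fin K → ℝ) (l : Fin K) : (Fin K → ℝ) →L[ℝ] ℝ :=
  softmax u l • (.proj l - ∑ m, softmax u m • .proj (R := ℝ) (φ := fun _ => ℝ) m)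

lemma softmaxDeriv_apply (u : Fin K → ℝ) (l : Fin K) (v : Fin K → ℝ) :
    softmaxDeriv u l v = softmax u l * (v l - ∑ m, softmax u m * v m) := by
  simp [softmaxDeriv]

theorem HasDerivAt.softmax {w : ℝ → Fin K → ℝ} {w' : Fin K → ℝ} {t : ℝ}
    (hw : HasDerivAt w w' t) (l : Fin K) :
    HasDerivAt (fun s => softmax (w s) l) (softmaxDeriv (w t) l w') t := by
  have : Nonempty (Fin K) := ⟨l⟩
  have hexp : ∀ m, HasDerivAt (fun s => Real.exp (w s m)) (Real.exp (w t m) * w' m) t :=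
    fun m => (hasDerivAt_pi.1 hw m).exp
  have hsum := HasDerivAt.fun_sum fun m (_ : m ∈ Finset.univ) => hexp m
  refine ((hexp l).div hsum (sum_exp_pos (w t)).ne').congr_deriv ?_
  simp only [softmaxDeriv_apply, _root_.softmax, div_mul_eq_mul_div, ← Finset.sum_div]
  field_simp

lemma hasDerivAt_softmaxDeriv_add_smul (u v : Fin K → ℝ) (l : Fin K) (t : ℝ) :
    HasDerivAt (fun s => softmaxDeriv (u + s • v) l v)
      (softmax (u + t • v) l * ((v l - ∑ m, softmax (u + t • v) m * v m) ^ 2 -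
        ∑ m, softmax (u + t • v) m * ((v m - ∑ j, softmax (u + t • v) j * v j) * v m))) t := by
  have hline := hasDerivAt_add_smul u v t
  have hmean : HasDerivAt (fun s => ∑ m, softmax (u + s • v) m * v m)
      (∑ m, softmax (u + t • v) m * ((v m - ∑ j, softmax (u + t • v) j * v j) * v m)) t := by
    refine (HasDerivAt.fun_sum fun m _ => (hline.softmax m).mul_const (v m)).congr_deriv ?_
    refine Finset.sum_congr rfl fun m _ => ?_
    rw [softmaxDeriv_apply]
    ring
  simp only [softmaxDeriv_apply]
  refine ((hline.softmax l).mul (hmean.const_sub (v l))).congr_deriv ?_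
  rw [softmaxDeriv_apply]
  ring

lemma abs_softmax_mul_sq_sub_variance_le (w v : Fin K → ℝ) (l : Fin K) :
    |softmax w l * ((v l - ∑ m, softmax w m * v m) ^ 2 -
      ∑ m, softmax w m * ((v m - ∑ j, softmax w j * v j) * v m))| ≤ 6 * ‖v‖ ^ 2 := by
  have : Nonempty (Fin K) := ⟨l⟩
  have hv : ∀ m, |v m| ≤ ‖v‖ := fun m => norm_le_pi_norm v m
  have hmean : |∑ m, softmax w m * v m| ≤ ‖v‖ := abs_sum_softmax_mul_le w hv
  have hdev : ∀ m, |v m - ∑ j, softmax w j * v j| ≤ 2 * ‖v‖ := fun m =>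
    (abs_sub _ _).trans (by linarith [hv m])
  have hvar : |∑ m, softmax w m * ((v m - ∑ j, softmax w j * v j) * v m)| ≤ 2 * ‖v‖ ^ 2 :=
    abs_sum_softmax_mul_le w fun m => by
      rw [abs_mul, sq, ← mul_assoc]
      exact mul_le_mul (hdev m) (hv m) (abs_nonneg _) (by positivity)
  have hsq : (v l - ∑ m, softmax w m * v m) ^ 2 ≤ (2 * ‖v‖) ^ 2 :=
    sq_le_sq' (abs_le.1 (hdev l)).1 (abs_le.1 (hdev l)).2
  rw [abs_mul, abs_of_nonneg (softmax_nonneg w l)]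
  calc _ ≤ 1 * (4 * ‖v‖ ^ 2 + 2 * ‖v‖ ^ 2) := by
        refine mul_le_mul (softmax_le_one w l) ((abs_sub _ _).trans (add_le_add ?_ hvar))
          (abs_nonneg _) zero_le_one
        rw [abs_of_nonneg (sq_nonneg _)]
        linarith
    _ = 6 * ‖v‖ ^ 2 := by ring

theorem abs_softmax_add_sub_sub_softmaxDeriv_le (u v : Fin K → ℝ) (l : Fin K) :
    |softmax (u + v) l - softmax u l - softmaxDeriv u l v| ≤ 6 * ∑ m, v m ^ 2 := by
  have := abs_sub_sub_deriv_le_of_abs_deriv2_le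
    (f := fun t => softmax (u + t • v) l) (f' := fun t => softmaxDeriv (u + t • v) l v)
    (fun t _ => (hasDerivAt_add_smul u v t).softmax l)
    (fun t _ => hasDerivAt_softmaxDeriv_add_smul u v l t)
    (fun t _ => abs_softmax_mul_sq_sub_variance_le (u + t • v) v l)
  simp only [one_smul, zero_smul, add_zero] at this
  exact this.trans (mul_le_mul_of_nonneg_left (sq_norm_le_sum_sq v) (by norm_num))

end Softmax

theorem softmax_jensen_gap_general (K : ℕ) :
    ∃ c : ℝ, 0 < c ∧
      ∀ (Ω : Type) [MeasurableSpace Ω] (μ : Measure Ω) [IsProbabilityMeasure μ],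
        ∀ ξ : Ω → (Fin K → ℝ), AEStronglyMeasurable ξ μ →
          Integrable (fun ω => ‖ξ ω‖ ^ 2) μ →
          ∀ l : Fin K,
            |(∫ ω, softmax (ξ ω) l ∂μ) - softmax (∫ ω, ξ ω ∂μ) l| ≤
              c * ∑ m, ∫ ω, (ξ ω m - ∫ ω', ξ ω' m ∂μ) ^ 2 ∂μ := by
  refine ⟨6, by norm_num, fun Ω _ μ _ ξ hmeas hint l => ?_⟩
  have : Nonempty (Fin K) := ⟨l⟩
  have hξ2 : MemLp ξ 2 μ := (memLp_two_iff_integrable_sq_norm hmeas).2 hint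
  have hξ : Integrable ξ μ := hξ2.integrable one_le_two
  have hvar : ∀ m, Integrable (fun ω => (ξ ω m - (∫ ω', ξ ω' ∂μ) m) ^ 2) μ := fun m =>
    ((hξ2.eval m).sub (memLp_const _)).integrable_sq
  have hσ : Integrable (fun ω => softmax (ξ ω) l) μ :=
    .of_bound ((continuous_softmax l).comp_aestronglyMeasurable hmeas) 1 (.of_forall fun ω => by
      rw [Real.norm_eq_abs, abs_of_nonneg (softmax_nonneg _ l)]
      exact softmax_le_one _ l)
  have hgap := abs_integral_comp_sub_apply_integral_le hξ (f := (softmax · l)) hσ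
    (softmaxDeriv _ l) ((integrable_finsetSum _ fun m _ => hvar m).const_mul 6) fun ω => by
      have h := abs_softmax_add_sub_sub_softmaxDeriv_le (∫ ω', ξ ω' ∂μ) (ξ ω - ∫ ω', ξ ω' ∂μ) l
      rwa [add_sub_cancel] at h
  rw [integral_const_mul, integral_finsetSum _ fun m _ => hvar m] at hgap
  simpa only [eval_integral hξ.eval] using hgap

/-- Lemma C.4 of the SelMix paper: there is a constant `c > 0` depending only on `K` such
that for every random vector `ξ` in `ℝ^K` with `‖ξ‖²` integrable and every coordinate `l`,
`|E[σ_l(ξ)] - σ_l(E[ξ])| ≤ c ∑ₘ Var(ξ_m)`. -/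
theorem softmax_jensen_gap (K : ℕ) (hK : 1 ≤ K) :
    ∃ c : ℝ, 0 < c ∧
      ∀ (Ω : Type) [MeasurableSpace Ω] (μ : Measure Ω) [IsProbabilityMeasure μ],
        ∀ ξ : Ω → (Fin K → ℝ), AEStronglyMeasurable ξ μ →
          Integrable (fun ω => ‖ξ ω‖ ^ 2) μ →
          ∀ l : Fin K,
            |(∫ ω, softmax (ξ ω) l ∂μ) - softmax (∫ ω, ξ ω ∂μ) l| ≤
              c * ∑ m, ∫ ω, (ξ ω m - ∫ ω', ξ ω' m ∂μ) ^ 2 ∂μ :=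
  softmax_jensen_gap_general K
end
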